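/- arXiv:1504.07467 — 6 statements merged into one kernel-verified Lean document; each statement's English description precedes it below -/
import Mathlib

section
/- Let G be a finite group acting on a finite set X. Then (1/|G|)·Σ_{(g_0,g_1)} |X^{⟨g_0,g_1⟩}| = Σ_{[g]} |X^{⟨g⟩}/C_G(g)|, where the first sum ranges over all pairs (g_0,g_1) of commuting elements of G, and the second sum ranges over a set of representatives g of the conjugacy classes of elements of G, X^{⟨g⟩} is the fixed point set of g, C_G(g) is the centralizer of g in G, and |X^{⟨g⟩}/C_G(g)| is the number of C_G(g)-orbits on X^{⟨g⟩}. -/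
open scoped BigOperators

open MulAction

namespace OrbifoldEulerAux

variable {G : Type*} [Group G] {X : Type*} [MulAction G X]

/-- The centralizer of `g` acts on the fixed points of `g`. -/
instance centSMul (g : G) : SMul (Subgroup.centralizer ({g} : Set G)) {x : X // g • x = x} :=
  ⟨fun h x => ⟨(h : G) • (x : X), by
    have hc : (h : G) * g = g * (h : G) := Subgroup.mem_centralizer_singleton_iff.mp h.2
    rw [← mul_smul, ← hc, mul_smul, x.2]⟩⟩

@[simp] lemma coe_centSMul (g : G) (h : Subgroup.centralizer ({g} : Set G))
    (x : {x : X // g • x = x}) : ((h • x : {x : X // g • x = x}) : X) = (h : G) • (x : X) := rfl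

instance centMulAction (g : G) :
    MulAction (Subgroup.centralizer ({g} : Set G)) {x : X // g • x = x} where
  one_smul x := Subtype.ext (one_smul G (x : X))
  mul_smul h k x := Subtype.ext (mul_smul (h : G) (k : G) (x : X))

/-- The `Quot` appearing in the statement is the orbit space of the centralizer action. -/
noncomputable def quotEquivOrbitQuotient (g : G) :
    (Quot fun (x y : {x : X // g • x = x}) =>
        ∃ h ∈ Subgroup.centralizer ({g} : Set G), h • (x : X) = (y : X)) ≃
      Quotient (orbitRel (Subgroup.centralizer ({g} : Set G)) {x : X // g • x = x}) :=
  Quot.congrRight fun a b => by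
    rw [orbitRel_apply]
    constructor
    · rintro ⟨h, hm, e⟩
      refine ⟨(⟨h, hm⟩ : Subgroup.centralizer ({g} : Set G))⁻¹, Subtype.ext ?_⟩
      simp [← e]
    · rintro ⟨h, e⟩
      refine ⟨(h : G)⁻¹, inv_mem h.2, ?_⟩
      have e' : (h : G) • (b : X) = (a : X) := congrArg Subtype.val e
      rw [← e', inv_smul_smul]

lemma conj_mem_centralizer {c r k : G} (hk : k ∈ Subgroup.centralizer ({r} : Set G)) :
    c * k * c⁻¹ ∈ Subgroup.centralizer ({c * r * c⁻¹} : Set G) := by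
  rw [Subgroup.mem_centralizer_singleton_iff] at hk ⊢
  calc c * k * c⁻¹ * (c * r * c⁻¹) = c * (k * r) * c⁻¹ := by group
    _ = c * (r * k) * c⁻¹ := by rw [hk]
    _ = c * r * c⁻¹ * (c * k * c⁻¹) := by group

/-- Conjugate elements have equivalent fixed-point sets. -/
def fixedConjEquiv (c r : G) : {x : X // r • x = x} ≃ {x : X // (c * r * c⁻¹) • x = x} where
  toFun x := ⟨c • (x : X), by
    have h1 : c * r * c⁻¹ * c = c * r := by group
    rw [← mul_smul, h1, mul_smul, x.2]⟩
  invFun y := ⟨c⁻¹ • (y : X), by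
    have h1 : r * c⁻¹ = c⁻¹ * (c * r * c⁻¹) := by group
    rw [← mul_smul, h1, mul_smul, y.2]⟩
  left_inv x := Subtype.ext (by simp)
  right_inv y := Subtype.ext (by simp)

lemma card_quot_conj {r g : G} (h : IsConj r g) :
    Nat.card (Quot fun (x y : {x : X // r • x = x}) =>
        ∃ h ∈ Subgroup.centralizer ({r} : Set G), h • (x : X) = (y : X)) =
      Nat.card (Quot fun (x y : {x : X // g • x = x}) =>
        ∃ h ∈ Subgroup.centralizer ({g} : Set G), h • (x : X) = (y : X)) := by
  obtain ⟨c, hc⟩ := isConj_iff.mp h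
  subst hc
  refine Nat.card_congr (Quot.congr (fixedConjEquiv c r) fun a b => ?_)
  constructor
  · rintro ⟨k, hk, e⟩
    refine ⟨c * k * c⁻¹, conj_mem_centralizer hk, ?_⟩
    show (c * k * c⁻¹) • (c • (a : X)) = c • (b : X)
    have h1 : c * k * c⁻¹ * c = c * k := by group
    rw [← mul_smul, h1, mul_smul, e]
  · rintro ⟨k, hk, e⟩
    have e' : k • (c • (a : X)) = c • (b : X) := e
    have hk' : c⁻¹ * k * c ∈ Subgroup.centralizer ({r} : Set G) := by
      have := conj_mem_centralizer (c := c⁻¹) hk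
      have h2 : c⁻¹ * (c * r * c⁻¹) * c⁻¹⁻¹ = r := by group
      rw [h2] at this
      simpa [mul_assoc] using this
    refine ⟨c⁻¹ * k * c, hk', ?_⟩
    rw [mul_smul, mul_smul, e', inv_smul_smul]

lemma card_centralizer_conj {r g : G} (h : IsConj r g) :
    Nat.card (Subgroup.centralizer ({r} : Set G)) =
      Nat.card (Subgroup.centralizer ({g} : Set G)) := by
  obtain ⟨c, hc⟩ := isConj_iff.mp h
  subst hc
  refine Nat.card_congr ⟨fun k => ⟨c * k * c⁻¹, conj_mem_centralizer k.2⟩,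
    fun k => ⟨c⁻¹ * k * c, ?_⟩, fun k => Subtype.ext (by group), fun k => Subtype.ext (by group)⟩
  have := conj_mem_centralizer (c := c⁻¹) k.2
  have h2 : c⁻¹ * (c * r * c⁻¹) * c⁻¹⁻¹ = r := by group
  rw [h2] at this
  simpa [mul_assoc] using this

/-- The stabilizer of the conjugation action is the centralizer. -/
def stabConjEquivCentralizer (r : G) :
    stabilizer (ConjAct G) r ≃ Subgroup.centralizer ({r} : Set G) where
  toFun c := ⟨ConjAct.ofConjAct (c : ConjAct G), by
    rw [Subgroup.mem_centralizer_singleton_iff]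
    have hc := c.2
    rw [mem_stabilizer_iff, ConjAct.smul_def] at hc
    have := congrArg (fun z => z * ConjAct.ofConjAct (c : ConjAct G)) hc
    simpa [mul_assoc] using this⟩
  invFun h := ⟨ConjAct.toConjAct (h : G), by
    rw [mem_stabilizer_iff, ConjAct.smul_def, ConjAct.ofConjAct_toConjAct]
    have h2 := Subgroup.mem_centralizer_singleton_iff.mp h.2
    rw [h2]; group⟩
  left_inv c := Subtype.ext (by simp)
  right_inv h := Subtype.ext (by simp)

/-- Orbit-stabilizer for the conjugation action: the size of a conjugacy class times the
size of the centralizer is the order of the group. -/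
lemma card_conjClass_mul_card_centralizer [Finite G] (r : G) :
    Nat.card {g : G // IsConj r g} * Nat.card (Subgroup.centralizer ({r} : Set G)) =
      Nat.card G := by
  have e1 : {g : G // IsConj r g} ≃ orbit (ConjAct G) r :=
    Equiv.subtypeEquivRight fun g => by
      rw [isConj_comm, ← ConjAct.mem_orbit_conjAct]
  calc Nat.card {g : G // IsConj r g} * Nat.card (Subgroup.centralizer ({r} : Set G))
      = Nat.card (orbit (ConjAct G) r × stabilizer (ConjAct G) r) := by
        rw [Nat.card_prod, Nat.card_congr e1,
          Nat.card_congr (stabConjEquivCentralizer r).symm]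
    _ = Nat.card (ConjAct G) := Nat.card_congr (orbitProdStabilizerEquivGroup (ConjAct G) r)
    _ = Nat.card G := rfl

/-- Pairs `(h, x)` with `h` commuting with `g` and `x` fixed by both, as a subtype of the
product of the centralizer and the fixed-point set. -/
def pairEquiv (g : G) :
    {q : G × X // q.1 * g = g * q.1 ∧ g • q.2 = q.2 ∧ q.1 • q.2 = q.2} ≃
      {ab : Subgroup.centralizer ({g} : Set G) × {x : X // g • x = x} //
        ab.1 • ab.2 = ab.2} where
  toFun q := ⟨(⟨q.1.1, Subgroup.mem_centralizer_singleton_iff.mpr q.2.1⟩, ⟨q.1.2, q.2.2.1⟩),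
    Subtype.ext q.2.2.2⟩
  invFun ab := ⟨(ab.1.1.1, ab.1.2.1),
    ⟨Subgroup.mem_centralizer_singleton_iff.mp ab.1.1.2, ab.1.2.2, congrArg Subtype.val ab.2⟩⟩
  left_inv _ := rfl
  right_inv _ := rfl

/-- Burnside's lemma applied to the centralizer of `g` acting on the fixed points of `g`. -/
lemma burnside_piece (g : G) :
    Nat.card {q : G × X // q.1 * g = g * q.1 ∧ g • q.2 = q.2 ∧ q.1 • q.2 = q.2} =
      Nat.card (Quot fun (x y : {x : X // g • x = x}) =>
          ∃ h ∈ Subgroup.centralizer ({g} : Set G), h • (x : X) = (y : X)) *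
        Nat.card (Subgroup.centralizer ({g} : Set G)) := by
  rw [Nat.card_congr (quotEquivOrbitQuotient (X := X) g)]
  rw [Nat.card_congr ((pairEquiv g).trans
    ((Equiv.subtypeProdEquivSigmaSubtype fun (a : Subgroup.centralizer ({g} : Set G))
        (b : {x : X // g • x = x}) => a • b = b).trans
      (sigmaFixedByEquivOrbitsProdGroup (Subgroup.centralizer ({g} : Set G))
        {x : X // g • x = x}))), Nat.card_prod]

/-- Splitting commuting pairs with a common fixed point along the first coordinate. -/
def sigmaEquiv :
    {p : (G × G) × X //
        p.1.1 * p.1.2 = p.1.2 * p.1.1 ∧ p.1.1 • p.2 = p.2 ∧ p.1.2 • p.2 = p.2} ≃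
      Σ g : G, {q : G × X // q.1 * g = g * q.1 ∧ g • q.2 = q.2 ∧ q.1 • q.2 = q.2} where
  toFun p := ⟨p.1.1.1, ⟨(p.1.1.2, p.1.2), ⟨p.2.1.symm, p.2.2.1, p.2.2.2⟩⟩⟩
  invFun s := ⟨((s.1, s.2.1.1), s.2.1.2), ⟨s.2.2.1.symm, s.2.2.2.1, s.2.2.2.2⟩⟩
  left_inv _ := rfl
  right_inv _ := rfl

end OrbifoldEulerAux

open OrbifoldEulerAux in
/-- For a finite group `G` acting on a finite set `X`,
`(1/|G|) · Σ_{(g₀,g₁) commuting} |X^⟨g₀,g₁⟩| = Σ_{[g]} |X^⟨g⟩ / C_G(g)|`,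
the right-hand sum ranging over a set `R` of representatives of the conjugacy classes of
elements of `G`.  Here `X^⟨g⟩ = {x : X // g • x = x}` is the fixed point set of `g`,
`C_G(g)` is the centralizer of `g`, and the number of `C_G(g)`-orbits on `X^⟨g⟩` is encoded
as the cardinality of the quotient of `X^⟨g⟩` by the relation identifying `x` with `h • x`
for `h ∈ C_G(g)`. -/
theorem orbifold_euler_char_eq_sum_over_conjugacy_classes
    (G : Type*) [Group G] [Finite G] (X : Type*) [MulAction G X] [Finite X]
    (R : Finset G) (hR : ∀ g : G, ∃! r, r ∈ R ∧ IsConj r g) :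
    (Nat.card {p : (G × G) × X //
        p.1.1 * p.1.2 = p.1.2 * p.1.1 ∧ p.1.1 • p.2 = p.2 ∧ p.1.2 • p.2 = p.2} : ℚ) /
        (Nat.card G : ℚ) =
      ∑ r ∈ R,
        (Nat.card (Quot fun (x y : {x : X // r • x = x}) =>
          ∃ h ∈ Subgroup.centralizer ({r} : Set G), h • (x : X) = (y : X)) : ℚ) := by
  classical
  haveI : Fintype G := Fintype.ofFinite G
  set n : G → ℕ := fun g => Nat.card (Quot fun (x y : {x : X // g • x = x}) =>
    ∃ h ∈ Subgroup.centralizer ({g} : Set G), h • (x : X) = (y : X)) with hn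
  set m : G → ℕ := fun g => Nat.card (Subgroup.centralizer ({g} : Set G)) with hm
  -- representative function
  choose φ hspec using hR
  have hφ : ∀ g : G, φ g ∈ R ∧ IsConj (φ g) g := fun g => (hspec g).1
  have hφeq : ∀ {r g : G}, r ∈ R → IsConj r g → φ g = r := by
    intro r g hr hc
    exact ((hspec g).2 r ⟨hr, hc⟩).symm
  -- step 1: total count as a sum over g
  have h1 : Nat.card {p : (G × G) × X //
      p.1.1 * p.1.2 = p.1.2 * p.1.1 ∧ p.1.1 • p.2 = p.2 ∧ p.1.2 • p.2 = p.2} =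
      ∑ g : G, n g * m g := by
    rw [Nat.card_congr (sigmaEquiv (G := G) (X := X))]
    haveI : ∀ g : G, Fintype {q : G × X //
        q.1 * g = g * q.1 ∧ g • q.2 = q.2 ∧ q.1 • q.2 = q.2} := fun g => Fintype.ofFinite _
    rw [Nat.card_eq_fintype_card, Fintype.card_sigma]
    refine Finset.sum_congr rfl fun g _ => ?_
    rw [← Nat.card_eq_fintype_card, burnside_piece g]
  -- step 2: group the sum by conjugacy class representatives
  have h2 : ∑ g : G, n g * m g = ∑ r ∈ R, Nat.card G * n r := by
    rw [← Finset.sum_fiberwise_of_maps_to (g := φ) (fun g _ => (hφ g).1) (fun g => n g * m g)]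
    refine Finset.sum_congr rfl fun r hr => ?_
    have hconst : ∀ g ∈ Finset.univ.filter fun g => φ g = r, n g * m g = n r * m r := by
      intro g hg
      have hrg : IsConj r g := by
        have h3 := (Finset.mem_filter.mp hg).2
        have h2 := (hφ g).2
        rwa [h3] at h2
      rw [hn, hm]
      dsimp only
      rw [card_quot_conj hrg, card_centralizer_conj hrg]
    rw [Finset.sum_congr rfl hconst, Finset.sum_const, smul_eq_mul]
    have hcard : (Finset.univ.filter fun g => φ g = r).card =
        Nat.card {g : G // IsConj r g} := by
      rw [Nat.card_eq_fintype_card, Fintype.card_subtype]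
      congr 1
      ext g
      simp only [Finset.mem_filter, Finset.mem_univ, true_and]
      constructor
      · intro h
        have h2 := (hφ g).2; rwa [h] at h2
      · intro h
        exact hφeq hr h
    rw [hcard, mul_comm (n r) (m r), ← mul_assoc,
      card_conjClass_mul_card_centralizer r]
  have hkey : Nat.card {p : (G × G) × X //
      p.1.1 * p.1.2 = p.1.2 * p.1.1 ∧ p.1.1 • p.2 = p.2 ∧ p.1.2 • p.2 = p.2} =
      Nat.card G * ∑ r ∈ R, n r := by
    rw [h1, h2, Finset.mul_sum]
  rw [hkey]
  have hG0 : (Nat.card G : ℚ) ≠ 0 := Nat.cast_ne_zero.mpr Nat.card_pos.ne'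
  push_cast
  rw [mul_div_cancel_left₀ _ hG0]
end

section
/- Let G be a finite group acting on a finite set X and let k ≥ 0. Then χ^{(k)}(X,G) = Σ_{[φ]} |X^{⟨φ⟩}/C_G(φ)|, where the sum ranges over the orbits of the conjugation action of G on the set Hom(ℤᵏ, G) of group homomorphisms φ: ℤᵏ → G (equivalently, on the set of k-tuples of pairwise commuting elements of G), X^{⟨φ⟩} is the set of points of X fixed by every element of the image of φ, C_G(φ) = {g ∈ G : g⁻¹φg = φ} is the centralizer of the image of φ, and |X^{⟨φ⟩}/C_G(φ)| is the number of C_G(φ)-orbits on X^{⟨φ⟩}. In particular χ^{(k)}(X,G) is a non-negative integer. -/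
open scoped BigOperators

/-- The Euler characteristic of order `k` of a `G`-set `X`:
`χ⁽ᵏ⁾(X,G) = (1/|G|) · Σ |X^⟨g₀,…,g_k⟩|`, the sum ranging over all `(k+1)`-tuples of
pairwise commuting elements of `G`.  The sum is encoded as the cardinality of the set of
pairs `(g, x)` where `g` is a commuting `(k+1)`-tuple and `x` a common fixed point. -/
noncomputable def chiOrder (k : ℕ) (G : Type*) [Group G] (X : Type*) [MulAction G X] : ℚ :=
  (Nat.card {p : (Fin (k + 1) → G) × X //
      (∀ i j, Commute (p.1 i) (p.1 j)) ∧ ∀ i, p.1 i • p.2 = p.2} : ℚ) / (Nat.card G : ℚ)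

section Aux

open MulAction

variable {G : Type*} [Group G] {k : ℕ}

private lemma conj_comm' {g a b : G} (hab : a * b = b * a) :
    (g * a * g⁻¹) * (g * b * g⁻¹) = (g * b * g⁻¹) * (g * a * g⁻¹) := by
  have h1 : (g * a * g⁻¹) * (g * b * g⁻¹) = g * (a * b) * g⁻¹ := by group
  have h2 : (g * b * g⁻¹) * (g * a * g⁻¹) = g * (b * a) * g⁻¹ := by group
  rw [h1, h2, hab]

/-- The centralizer of (the image of) a tuple. -/
def tupleCent (φ : Fin k → G) : Subgroup G where
  carrier := {h | ∀ i, h * φ i = φ i * h}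
  one_mem' := fun i => by rw [one_mul, mul_one]
  mul_mem' := fun {a b} ha hb i => by
    rw [mul_assoc, hb i, ← mul_assoc, ha i, mul_assoc]
  inv_mem' := fun {a} ha i => by
    have h : Commute a (φ i) := ha i
    exact h.inv_left.eq

lemma mem_tupleCent {φ : Fin k → G} {h : G} :
    h ∈ tupleCent φ ↔ ∀ i, h * φ i = φ i * h := Iff.rfl

variable {X : Type*} [MulAction G X]

/-- The common fixed points of a tuple. -/
abbrev fixT (X : Type*) [MulAction G X] (φ : Fin k → G) : Type _ :=
  {x : X // ∀ i, φ i • x = x}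

instance fixTAction (φ : Fin k → G) : MulAction (tupleCent φ) (fixT X φ) where
  smul h x := ⟨(h : G) • (x : X), fun i => by
    rw [smul_smul, ← h.2 i, ← smul_smul, x.2 i]⟩
  one_smul x := Subtype.ext (one_smul G (x : X))
  mul_smul a b x := Subtype.ext (mul_smul (a : G) (b : G) (x : X))

lemma fixT_coe_smul (φ : Fin k → G) (h : tupleCent φ) (x : fixT X φ) :
    ((h • x : fixT X φ) : X) = (h : G) • (x : X) := rfl

/-- The relation from the statement. -/
def tupleRel (φ : Fin k → G) (x y : fixT X φ) : Prop :=
  ∃ h : G, (∀ i, h * φ i = φ i * h) ∧ h • (x : X) = (y : X)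

/-- The number of orbits of the centralizer on the fixed points. -/
noncomputable def nOrb (X : Type*) [MulAction G X] (φ : Fin k → G) : ℕ :=
  Nat.card (Quot (tupleRel (X := X) φ))

lemma quot_equiv (φ : Fin k → G) :
    Nonempty (Quot (tupleRel (X := X) φ) ≃ Quotient (orbitRel (tupleCent φ) (fixT X φ))) := by
  refine ⟨Quot.congrRight fun x y => ?_⟩
  constructor
  · rintro ⟨h, hc, hxy⟩
    refine ⟨⟨h⁻¹, (tupleCent φ).inv_mem hc⟩, Subtype.ext ?_⟩
    rw [fixT_coe_smul]
    rw [← hxy, inv_smul_smul]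
  · rintro ⟨⟨h, hc⟩, he⟩
    refine ⟨h⁻¹, (tupleCent φ).inv_mem hc, ?_⟩
    have := congrArg Subtype.val he
    rw [fixT_coe_smul] at this
    rw [← this, inv_smul_smul]

lemma nOrb_eq (φ : Fin k → G) :
    nOrb X φ = Nat.card (Quotient (orbitRel (tupleCent φ) (fixT X φ))) :=
  Nat.card_congr (quot_equiv (X := X) φ).some

/-- Conjugation invariance of the orbit count. -/
lemma nOrb_conj (g : G) (φ : Fin k → G) :
    nOrb X (fun i => g * φ i * g⁻¹) = nOrb X φ := by
  set ψ : Fin k → G := fun i => g * φ i * g⁻¹ with hψ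
  let eFix : fixT X φ ≃ fixT X ψ :=
    { toFun := fun x => ⟨g • (x : X), fun i => by
        show (g * φ i * g⁻¹) • g • (x : X) = g • (x : X)
        rw [smul_smul, inv_mul_cancel_right, ← smul_smul, x.2 i]⟩
      invFun := fun y => ⟨g⁻¹ • (y : X), fun i => by
        have h2 : φ i * g⁻¹ = g⁻¹ * (g * φ i * g⁻¹) := by group
        rw [smul_smul, h2, ← smul_smul, y.2 i]⟩
      left_inv := fun x => Subtype.ext (inv_smul_smul g (x : X))
      right_inv := fun y => Subtype.ext (smul_inv_smul g (y : X)) }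
  refine Nat.card_congr (Quot.congr (ra := tupleRel (X := X) φ) (rb := tupleRel (X := X) ψ) eFix ?_).symm
  have hcoe : ∀ z : fixT X φ, ((eFix z : fixT X ψ) : X) = g • (z : X) := fun z => rfl
  intro x y
  simp only [tupleRel, hcoe]
  constructor
  · rintro ⟨h, hc, hxy⟩
    refine ⟨g * h * g⁻¹, fun i => ?_, ?_⟩
    · simp only [hψ]
      exact conj_comm' (hc i)
    · rw [smul_smul, show g * h * g⁻¹ * g = g * h from by group, mul_smul, hxy]
  · rintro ⟨h, hc, hxy⟩
    refine ⟨g⁻¹ * h * g, fun i => ?_, ?_⟩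
    · have this := conj_comm' (g := g⁻¹) (a := h) (b := ψ i) (hc i)
      have e1 : g⁻¹ * h * g⁻¹⁻¹ = g⁻¹ * h * g := by group
      have e2 : g⁻¹ * ψ i * g⁻¹⁻¹ = φ i := by simp only [hψ]; group
      rw [e1, e2] at this
      exact this
    · rw [mul_smul, mul_smul, hxy, inv_smul_smul]

lemma card_tupleCent_conj (g : G) (φ : Fin k → G) :
    Nat.card (tupleCent (fun i => g * φ i * g⁻¹)) = Nat.card (tupleCent φ) := by
  refine Nat.card_congr ⟨fun h => ⟨g⁻¹ * (h : G) * g, fun i => ?_⟩,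
    fun h => ⟨g * (h : G) * g⁻¹, fun i => conj_comm' (h.2 i)⟩,
    fun h => Subtype.ext (by group), fun h => Subtype.ext (by group)⟩
  have h2 : g⁻¹ * (h : G) * g = g⁻¹ * (h : G) * (g⁻¹)⁻¹ := by group
  have h3 : φ i = g⁻¹ * (g * φ i * g⁻¹) * (g⁻¹)⁻¹ := by group
  rw [h2, h3]
  exact conj_comm' (g := g⁻¹) (h.2 i)

/-- The stabilizer of a tuple under the conjugation action is the centralizer. -/
lemma card_stabilizer_conjAct (r : Fin k → G) :
    Nat.card (stabilizer (ConjAct G) r) = Nat.card (tupleCent r) := by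
  refine Nat.card_congr ⟨fun a => ⟨ConjAct.ofConjAct (a : ConjAct G), fun i => ?_⟩,
    fun h => ⟨ConjAct.toConjAct (h : G), ?_⟩,
    fun a => Subtype.ext rfl, fun h => Subtype.ext rfl⟩
  · have := congrFun a.2 i
    rw [Pi.smul_apply, ConjAct.smul_def] at this
    exact mul_inv_eq_iff_eq_mul.mp this
  · have : ∀ i, ConjAct.toConjAct (h : G) • r i = r i := fun i => by
      rw [ConjAct.smul_def, ConjAct.ofConjAct_toConjAct, mul_inv_eq_iff_eq_mul]
      exact h.2 i
    exact funext fun i => by rw [Pi.smul_apply]; exact this i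

/-- Orbit–stabilizer for the conjugation action on tuples. -/
lemma card_orbit_mul [Finite G] (r : Fin k → G) :
    Nat.card (orbit (ConjAct G) r) * Nat.card (tupleCent r) = Nat.card G := by
  classical
  have : Fintype G := Fintype.ofFinite G
  rw [← card_stabilizer_conjAct r]
  have h1 := card_orbit_mul_card_stabilizer_eq_card_group (ConjAct G) r
  rw [Nat.card_eq_fintype_card, Nat.card_eq_fintype_card, Nat.card_eq_fintype_card, h1]
  exact Fintype.card_congr ConjAct.ofConjAct.toEquiv

/-- Burnside step: the number of pairs `(h, x)` with `h` in the centralizer and `x` a common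
fixed point fixed by `h` equals the orbit count times the centralizer cardinality. -/
lemma burnside_step [Finite G] [Finite X] (φ : Fin k → G) :
    Nat.card {q : G × X // (q.1 ∈ tupleCent φ) ∧ (∀ i, φ i • q.2 = q.2) ∧ q.1 • q.2 = q.2}
      = nOrb X φ * Nat.card (tupleCent φ) := by
  classical
  have fG : Fintype G := Fintype.ofFinite G
  have fX : Fintype X := Fintype.ofFinite X
  have e : {q : G × X // (q.1 ∈ tupleCent φ) ∧ (∀ i, φ i • q.2 = q.2) ∧ q.1 • q.2 = q.2}
      ≃ Σ h : tupleCent φ, fixedBy (fixT X φ) h :=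
    { toFun := fun q => ⟨⟨q.1.1, q.2.1⟩, ⟨⟨q.1.2, q.2.2.1⟩, Subtype.ext q.2.2.2⟩⟩
      invFun := fun s => ⟨(s.1.1, s.2.1.1), s.1.2, s.2.1.2, congrArg Subtype.val s.2.2⟩
      left_inv := fun q => rfl
      right_inv := fun s => rfl }
  rw [Nat.card_congr e, nOrb_eq]
  rw [Nat.card_eq_fintype_card, Nat.card_eq_fintype_card, Nat.card_eq_fintype_card,
    Fintype.card_sigma]
  exact sum_card_fixedBy_eq_card_orbits_mul_card_group (tupleCent φ) (fixT X φ)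

end Aux

/-- For a finite group `G` acting on a finite set `X` and `k ≥ 0`,
`χ⁽ᵏ⁾(X,G) = Σ_{[φ]} |X^⟨φ⟩ / C_G(φ)|`, the sum ranging over a set `R` of representatives of
the orbits of the conjugation action of `G` on the set of `k`-tuples of pairwise commuting
elements of `G` (equivalently, on `Hom(ℤᵏ, G)`).  Here `X^⟨φ⟩` is the common fixed point set
of the `φ i`, `C_G(φ) = {h : ∀ i, h * φ i = φ i * h}` is the centralizer of the image of `φ`,
and the number of `C_G(φ)`-orbits on `X^⟨φ⟩` is encoded via a quotient.  In particular
`χ⁽ᵏ⁾(X,G)` is a non-negative integer. -/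
theorem chiOrder_eq_sum_over_commuting_tuples
    (G : Type*) [Group G] [Finite G] (X : Type*) [MulAction G X] [Finite X]
    (k : ℕ) (R : Finset (Fin k → G))
    (hRcomm : ∀ r ∈ R, ∀ i j, Commute (r i) (r j))
    (hR : ∀ φ : Fin k → G, (∀ i j, Commute (φ i) (φ j)) →
      ∃! r, r ∈ R ∧ ∃ g : G, ∀ i, g * φ i * g⁻¹ = r i) :
    chiOrder k G X =
        ∑ r ∈ R,
          (Nat.card (Quot fun (x y : {x : X // ∀ i, r i • x = x}) =>
            ∃ h : G, (∀ i, h * r i = r i * h) ∧ h • (x : X) = (y : X)) : ℚ) ∧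
      ∃ m : ℕ, chiOrder k G X = (m : ℚ) := by
  classical
  have fG : Fintype G := Fintype.ofFinite G
  have fX : Fintype X := Fintype.ofFinite X
  open MulAction in
  -- the representative map
  set ρ : (Fin k → G) → (Fin k → G) := fun φ =>
    if h : ∀ i j, Commute (φ i) (φ j) then (hR φ h).choose else φ with hρdef
  have hρspec : ∀ φ, (∀ i j, Commute (φ i) (φ j)) →
      ρ φ ∈ R ∧ ∃ g : G, ∀ i, g * φ i * g⁻¹ = ρ φ i := by
    intro φ h
    simp only [hρdef, dif_pos h]
    exact (hR φ h).choose_spec.1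
  have hρeq : ∀ φ, (∀ i j, Commute (φ i) (φ j)) → ∀ r ∈ R,
      (∃ g : G, ∀ i, g * φ i * g⁻¹ = r i) → ρ φ = r := by
    intro φ h r hr hconj
    have h1 := (hR φ h).choose_spec.2 r ⟨hr, hconj⟩
    simp only [hρdef, dif_pos h]
    exact h1.symm
  set S : Finset (Fin k → G) := Finset.univ.filter (fun φ => ∀ i j, Commute (φ i) (φ j))
    with hSdef
  have hmemS : ∀ φ, φ ∈ S ↔ ∀ i j, Commute (φ i) (φ j) := by
    intro φ; simp [hSdef]
  -- Step 1 : fiber the main count over the tail tuple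
  set P : (Fin (k + 1) → G) × X → Prop := fun p =>
    (∀ i j, Commute (p.1 i) (p.1 j)) ∧ ∀ i, p.1 i • p.2 = p.2 with hPdef
  have hN1 : Nat.card {p : (Fin (k + 1) → G) × X // P p}
      = ∑ φ ∈ S, ((Finset.univ.filter P).filter (fun p => Fin.tail p.1 = φ)).card := by
    rw [Nat.card_eq_fintype_card, Fintype.card_subtype]
    refine Finset.card_eq_sum_card_fiberwise (fun p hp => ?_)
    simp only [Finset.mem_coe, Finset.mem_filter, Finset.mem_univ, true_and, hPdef] at hp
    rw [Finset.mem_coe, hmemS]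
    exact fun i j => hp.1 i.succ j.succ
  -- Step 2 : each fiber is counted by Burnside
  have hN2 : ∀ φ ∈ S, ((Finset.univ.filter P).filter (fun p => Fin.tail p.1 = φ)).card
      = nOrb X φ * Nat.card (tupleCent φ) := by
    intro φ hφ
    rw [← burnside_step φ, Nat.card_eq_fintype_card, Fintype.card_subtype]
    refine Finset.card_bij' (fun p _ => (p.1 0, p.2)) (fun q _ => (Fin.cons q.1 φ, q.2))
      ?_ ?_ ?_ ?_
    · intro p hp
      simp only [Finset.mem_filter, Finset.mem_univ, true_and, hPdef] at hp ⊢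
      obtain ⟨⟨hcomm, hfix⟩, htail⟩ := hp
      refine ⟨fun i => ?_, fun i => ?_, hfix 0⟩
      · have : φ i = p.1 i.succ := by rw [← htail]; rfl
        rw [this]
        exact hcomm 0 i.succ
      · have : φ i = p.1 i.succ := by rw [← htail]; rfl
        rw [this]
        exact hfix i.succ
    · intro q hq
      simp only [Finset.mem_filter, Finset.mem_univ, true_and, hPdef] at hq ⊢
      obtain ⟨hcent, hfix, hfixq⟩ := hq
      have hφc := (hmemS φ).mp hφ
      refine ⟨⟨fun i j => ?_, fun i => ?_⟩, Fin.tail_cons _ _⟩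
      · refine Fin.cases ?_ (fun i' => ?_) i
        · refine Fin.cases ?_ (fun j' => ?_) j
          · exact Commute.refl _
          · simp only [Fin.cons_zero, Fin.cons_succ]
            exact hcent j'
        · refine Fin.cases ?_ (fun j' => ?_) j
          · simp only [Fin.cons_zero, Fin.cons_succ]
            exact ((hcent i').symm : φ i' * q.1 = q.1 * φ i')
          · simp only [Fin.cons_succ]
            exact hφc i' j'
      · refine Fin.cases ?_ (fun i' => ?_) i
        · simpa only [Fin.cons_zero] using hfixq
        · simpa only [Fin.cons_succ] using hfix i'
    · intro p hp
      simp only [Finset.mem_filter, Finset.mem_univ, true_and] at hp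
      show (Fin.cons (p.1 0) φ, p.2) = p
      refine Prod.ext ?_ rfl
      show Fin.cons (p.1 0) φ = p.1
      rw [← hp.2]
      exact Fin.cons_self_tail p.1
    · intro q hq
      have h0 : (Fin.cons q.1 φ : Fin (k + 1) → G) 0 = q.1 := Fin.cons_zero _ _
      exact Prod.ext h0 rfl
  -- Step 3 : group the commuting tuples into conjugacy classes
  have horb : ∀ r ∈ R, (S.filter fun φ => ρ φ = r)
      = Finset.univ.filter (fun φ => φ ∈ MulAction.orbit (ConjAct G) r) := by
    intro r hr
    ext φ
    simp only [Finset.mem_filter, Finset.mem_univ, true_and]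
    constructor
    · rintro ⟨hφS, hρφ⟩
      have hφc := (hmemS φ).mp hφS
      obtain ⟨g, hg⟩ := (hρspec φ hφc).2
      rw [hρφ] at hg
      refine ⟨ConjAct.toConjAct g⁻¹, funext fun i => ?_⟩
      show ConjAct.toConjAct g⁻¹ • r i = φ i
      rw [ConjAct.smul_def, ConjAct.ofConjAct_toConjAct, ← hg i]
      group
    · rintro ⟨c, hc⟩
      replace hc : c • r = φ := hc
      have hφeq : ∀ i, φ i = ConjAct.ofConjAct c * r i * (ConjAct.ofConjAct c)⁻¹ := by
        intro i
        have h1 : φ i = (c • r) i := by rw [hc]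
        rw [Pi.smul_apply, ConjAct.smul_def] at h1
        exact h1
      have hφc : ∀ i j, Commute (φ i) (φ j) := fun i j => by
        rw [hφeq i, hφeq j]
        exact conj_comm' (hRcomm r hr i j)
      refine ⟨(hmemS φ).mpr hφc, hρeq φ hφc r hr ⟨(ConjAct.ofConjAct c)⁻¹, fun i => ?_⟩⟩
      rw [hφeq i]
      group
  have hfibcard : ∀ r ∈ R, (S.filter fun φ => ρ φ = r).card * Nat.card (tupleCent r)
      = Nat.card G := by
    intro r hr
    rw [horb r hr, ← card_orbit_mul (k := k) r]
    congr 1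
    rw [Nat.card_eq_fintype_card]
    exact (Fintype.card_subtype _).symm
  have hconst : ∀ r ∈ R, ∀ φ ∈ S.filter (fun φ => ρ φ = r),
      nOrb X φ * Nat.card (tupleCent φ) = nOrb X r * Nat.card (tupleCent r) := by
    intro r hr φ hφ
    rw [Finset.mem_filter] at hφ
    obtain ⟨hφS, hρφ⟩ := hφ
    obtain ⟨g, hg⟩ := (hρspec φ ((hmemS φ).mp hφS)).2
    rw [hρφ] at hg
    have hre : r = fun i => g * φ i * g⁻¹ := funext fun i => (hg i).symm
    rw [hre, nOrb_conj, card_tupleCent_conj]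
  have key : Nat.card {p : (Fin (k + 1) → G) × X // P p}
      = (∑ r ∈ R, nOrb X r) * Nat.card G := by
    calc Nat.card {p : (Fin (k + 1) → G) × X // P p}
        = ∑ φ ∈ S, ((Finset.univ.filter P).filter (fun p => Fin.tail p.1 = φ)).card := hN1
      _ = ∑ φ ∈ S, nOrb X φ * Nat.card (tupleCent φ) := Finset.sum_congr rfl hN2
      _ = ∑ r ∈ R, ∑ φ ∈ S.filter (fun φ => ρ φ = r), nOrb X φ * Nat.card (tupleCent φ) :=
          (Finset.sum_fiberwise_of_maps_to (fun φ hφ => (hρspec φ ((hmemS φ).mp hφ)).1) _).symm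
      _ = ∑ r ∈ R, (S.filter (fun φ => ρ φ = r)).card * (nOrb X r * Nat.card (tupleCent r)) := by
          refine Finset.sum_congr rfl fun r hr => ?_
          rw [Finset.sum_congr rfl (hconst r hr), Finset.sum_const, smul_eq_mul]
      _ = ∑ r ∈ R, nOrb X r * Nat.card G := by
          refine Finset.sum_congr rfl fun r hr => ?_
          rw [← hfibcard r hr]
          ring
      _ = (∑ r ∈ R, nOrb X r) * Nat.card G := by rw [Finset.sum_mul]
  have hGne : ((Nat.card G : ℚ)) ≠ 0 := by
    exact_mod_cast (Nat.card_pos (α := G)).ne'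
  have heq : chiOrder k G X = ((∑ r ∈ R, nOrb X r : ℕ) : ℚ) := by
    unfold chiOrder
    rw [show (Nat.card {p : (Fin (k + 1) → G) × X //
        (∀ i j, Commute (p.1 i) (p.1 j)) ∧ ∀ i, p.1 i • p.2 = p.2})
      = (∑ r ∈ R, nOrb X r) * Nat.card G from key]
    rw [Nat.cast_mul, mul_div_assoc, div_self hGne, mul_one]
  constructor
  · rw [heq, Nat.cast_sum]
    rfl
  · exact ⟨∑ r ∈ R, nOrb X r, heq⟩
end

section
/- Let G be a finite group acting on a finite set X and let k ≥ 1. Then χ^{(k)}(X,G) = Σ_{[g]} χ^{(k−1)}(X^{⟨g⟩}, C_G(g)), where the sum ranges over a set of representatives g of the conjugacy classes of elements of G, X^{⟨g⟩} is the fixed point set of g regarded as a C_G(g)-set, and C_G(g) is the centralizer of g in G. -/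
open scoped BigOperators

/-- The centralizer `C_G(g)` acts on the fixed point set `X^⟨g⟩ = {x : X // g • x = x}`
by restriction of the `G`-action. -/
instance centralizerFixedAction (G : Type*) [Group G] (X : Type*) [MulAction G X] (g : G) :
    MulAction (Subgroup.centralizer ({g} : Set G)) {x : X // g • x = x} where
  smul h x := ⟨(h : G) • (x : X), by
    have hc : g * (h : G) = (h : G) * g :=
      Subgroup.mem_centralizer_iff.mp h.2 g (Set.mem_singleton g)
    calc g • ((h : G) • (x : X)) = (g * (h : G)) • (x : X) := (mul_smul _ _ _).symm
      _ = ((h : G) * g) • (x : X) := by rw [hc]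
      _ = (h : G) • g • (x : X) := mul_smul _ _ _
      _ = (h : G) • (x : X) := by rw [x.2]⟩
  one_smul x := Subtype.ext (by simp [HSMul.hSMul]; exact one_smul G (x : X))
  mul_smul a b x := Subtype.ext (by simp [HSMul.hSMul]; exact mul_smul (a : G) (b : G) (x : X))

section Aux

variable {G : Type*} [Group G] {X : Type*} [MulAction G X]

/-- auxiliary: the set counted by `chiOrder`. -/
abbrev ChiSet (k : ℕ) (G : Type*) [Group G] (X : Type*) [MulAction G X] :=
  {p : (Fin (k + 1) → G) × X //
      (∀ i j, Commute (p.1 i) (p.1 j)) ∧ ∀ i, p.1 i • p.2 = p.2}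

lemma chiOrder_eq (k : ℕ) (G : Type*) [Group G] (X : Type*) [MulAction G X] :
    chiOrder k G X = (Nat.card (ChiSet k G X) : ℚ) / (Nat.card G : ℚ) := rfl

lemma coe_smul_fixed (g : G) (h : Subgroup.centralizer ({g} : Set G)) (x : {x : X // g • x = x}) :
    ((h • x : {x : X // g • x = x}) : X) = (h : G) • (x : X) := rfl

/-- splitting off the first coordinate of a commuting tuple -/
def chiSigmaEquiv (m : ℕ) :
    ChiSet (m + 1) G X ≃
      Σ g : G, ChiSet m (Subgroup.centralizer ({g} : Set G)) {x : X // g • x = x} where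
  toFun p :=
    ⟨p.1.1 0,
      ⟨(fun i => ⟨p.1.1 i.succ, by
          rw [Subgroup.mem_centralizer_iff]
          rintro a rfl
          exact p.2.1 0 i.succ⟩,
        ⟨p.1.2, p.2.2 0⟩),
        ⟨fun i j => Subtype.ext (p.2.1 i.succ j.succ),
         fun i => Subtype.ext (p.2.2 i.succ)⟩⟩⟩
  invFun q :=
    ⟨(Fin.cons q.1 fun i => ((q.2.1.1 i : G)), (q.2.1.2 : X)),
      by
        constructor
        · intro i j
          refine Fin.cases ?_ (fun i' => ?_) i <;> refine Fin.cases ?_ (fun j' => ?_) j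
          · simp
          · simp; exact (Subgroup.mem_centralizer_iff.mp (q.2.1.1 j').2 q.1 rfl)
          · simp; exact (Subgroup.mem_centralizer_iff.mp (q.2.1.1 i').2 q.1 rfl).symm
          · simp; exact q.2.2.1 i' j'
        · intro i
          refine Fin.cases ?_ (fun i' => ?_) i
          · simpa using (q.2.1.2).2
          · simp; exact congrArg Subtype.val (q.2.2.2 i')⟩
  left_inv p := by
    apply Subtype.ext
    refine Prod.ext ?_ rfl
    funext i
    refine Fin.cases ?_ (fun i' => ?_) i <;> simp
  right_inv q := by
    rcases q with ⟨g, ⟨⟨f, x⟩, h⟩⟩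
    rfl

/-- conjugation map on the data counted by `chiOrder` over the centralizer -/
def conjMap (m : ℕ) (c r g : G) (hg : c * r * c⁻¹ = g) :
    ChiSet m (Subgroup.centralizer ({r} : Set G)) {x : X // r • x = x} →
      ChiSet m (Subgroup.centralizer ({g} : Set G)) {x : X // g • x = x} :=
  fun p =>
    ⟨(fun i => ⟨c * (p.1.1 i : G) * c⁻¹, by
        rw [Subgroup.mem_centralizer_iff]
        rintro a rfl
        have hc : r * (p.1.1 i : G) = (p.1.1 i : G) * r :=
          Subgroup.mem_centralizer_iff.mp (p.1.1 i).2 r rfl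
        subst hg
        calc c * r * c⁻¹ * (c * (p.1.1 i : G) * c⁻¹) = c * (r * (p.1.1 i : G)) * c⁻¹ := by group
          _ = c * ((p.1.1 i : G) * r) * c⁻¹ := by rw [hc]
          _ = c * (p.1.1 i : G) * c⁻¹ * (c * r * c⁻¹) := by group⟩,
      ⟨c • (p.1.2 : X), by
        subst hg
        have := (p.1.2).2
        simp [mul_smul, this]⟩),
      by
        refine ⟨fun i j => Subtype.ext ?_, fun i => Subtype.ext ?_⟩
        · have hij : (p.1.1 i : G) * (p.1.1 j : G) = (p.1.1 j : G) * (p.1.1 i : G) :=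
            congrArg Subtype.val (p.2.1 i j)
          show c * (p.1.1 i : G) * c⁻¹ * (c * (p.1.1 j : G) * c⁻¹)
              = c * (p.1.1 j : G) * c⁻¹ * (c * (p.1.1 i : G) * c⁻¹)
          calc c * (p.1.1 i : G) * c⁻¹ * (c * (p.1.1 j : G) * c⁻¹)
              = c * ((p.1.1 i : G) * (p.1.1 j : G)) * c⁻¹ := by group
            _ = c * ((p.1.1 j : G) * (p.1.1 i : G)) * c⁻¹ := by rw [hij]
            _ = c * (p.1.1 j : G) * c⁻¹ * (c * (p.1.1 i : G) * c⁻¹) := by group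
        · have hfix : (p.1.1 i : G) • (p.1.2 : X) = (p.1.2 : X) :=
            congrArg Subtype.val (p.2.2 i)
          show (c * (p.1.1 i : G) * c⁻¹) • (c • (p.1.2 : X)) = c • (p.1.2 : X)
          simp [mul_smul, hfix]⟩

/-- conjugate centralizer data are equinumerous -/
lemma card_chiSet_conj (m : ℕ) {r g : G} (h : IsConj r g) :
    Nat.card (ChiSet m (Subgroup.centralizer ({g} : Set G)) {x : X // g • x = x}) =
      Nat.card (ChiSet m (Subgroup.centralizer ({r} : Set G)) {x : X // r • x = x}) := by
  obtain ⟨c, hg⟩ := isConj_iff.mp h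
  have hr : c⁻¹ * g * c⁻¹⁻¹ = r := by rw [← hg]; group
  refine Nat.card_congr (Equiv.symm ⟨conjMap m c r g hg, conjMap m c⁻¹ g r hr, ?_, ?_⟩)
  · intro p
    apply Subtype.ext
    refine Prod.ext ?_ ?_
    · funext i
      apply Subtype.ext
      show c⁻¹ * (c * (p.1.1 i : G) * c⁻¹) * c⁻¹⁻¹ = (p.1.1 i : G)
      group
    · apply Subtype.ext
      show c⁻¹ • c • (p.1.2 : X) = (p.1.2 : X)
      simp
  · intro p
    apply Subtype.ext
    refine Prod.ext ?_ ?_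
    · funext i
      apply Subtype.ext
      show c * (c⁻¹ * (p.1.1 i : G) * c⁻¹⁻¹) * c⁻¹ = (p.1.1 i : G)
      group
    · apply Subtype.ext
      show c • c⁻¹ • (p.1.2 : X) = (p.1.2 : X)
      simp

lemma nat_card_sigma {ι : Type*} [Fintype ι] (α : ι → Type*) [∀ i, Finite (α i)] :
    Nat.card (Σ i, α i) = ∑ i, Nat.card (α i) := by
  letI : ∀ i, Fintype (α i) := fun i => Fintype.ofFinite _
  simp only [Nat.card_eq_fintype_card, Fintype.card_sigma]

end Aux

/-- The recursion for higher order Euler characteristics: for `k ≥ 1`,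
`χ⁽ᵏ⁾(X,G) = Σ_{[g]} χ⁽ᵏ⁻¹⁾(X^⟨g⟩, C_G(g))`, the sum ranging over a set `R` of
representatives of the conjugacy classes of elements of `G`. -/
theorem chiOrder_recursion
    (G : Type*) [Group G] [Finite G] (X : Type*) [MulAction G X] [Finite X]
    (k : ℕ) (hk : 1 ≤ k) (R : Finset G) (hR : ∀ g : G, ∃! r, r ∈ R ∧ IsConj r g) :
    chiOrder k G X =
      ∑ r ∈ R,
        chiOrder (k - 1) (Subgroup.centralizer ({r} : Set G)) {x : X // r • x = x} := by
  classical
  obtain ⟨m, rfl⟩ : ∃ m, k = m + 1 := ⟨k - 1, (Nat.succ_pred_eq_of_pos hk).symm⟩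
  simp only [Nat.add_sub_cancel]
  cases nonempty_fintype G
  cases nonempty_fintype X
  -- representative function
  set φ : G → G := fun g => (hR g).choose with hφdef
  have hφ : ∀ g, φ g ∈ R ∧ IsConj (φ g) g := fun g => (hR g).choose_spec.1
  have hφuniq : ∀ g r, r ∈ R ∧ IsConj r g → r = φ g := fun g r h => (hR g).choose_spec.2 r h
  -- card of the big set as a sum
  have hcard : (Nat.card (ChiSet (m + 1) G X) : ℚ) =
      ∑ g : G, (Nat.card
        (ChiSet m (Subgroup.centralizer ({g} : Set G)) {x : X // g • x = x}) : ℚ) := by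
    rw [Nat.card_congr (chiSigmaEquiv m),
      nat_card_sigma (fun g : G => ChiSet m (Subgroup.centralizer ({g} : Set G))
        {x : X // g • x = x})]
    push_cast
    ring
  -- orbit counting
  have horb : ∀ r : G,
      ((Finset.univ.filter (fun g => IsConj r g)).card : ℚ) *
        (Nat.card (Subgroup.centralizer ({r} : Set G)) : ℚ) = (Nat.card G : ℚ) := by
    intro r
    have h1 : (Finset.univ.filter (fun g => IsConj r g)).card
        = Fintype.card {g : G // IsConj r g} := (Fintype.card_subtype _).symm
    have h2 : Fintype.card {g : G // IsConj r g}
        = Nat.card (MulAction.orbit (ConjAct G) r) := by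
      rw [← Nat.card_eq_fintype_card]
      exact Nat.card_congr (Equiv.subtypeEquivRight fun g => by
        rw [ConjAct.mem_orbit_conjAct]
        exact isConj_comm)
    have h3 : Nat.card (MulAction.orbit (ConjAct G) r) *
        Nat.card (MulAction.stabilizer (ConjAct G) r) = Nat.card G := by
      simp only [Nat.card_eq_fintype_card]
      exact MulAction.card_orbit_mul_card_stabilizer_eq_card_group (ConjAct G) r
    have h4 := Subgroup.nat_card_centralizer_nat_card_stabilizer r
    rw [h1, h2, h4]
    exact_mod_cast h3
  have hGpos : (0 : ℚ) < (Nat.card G : ℚ) := by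
    exact_mod_cast Nat.cast_pos.mpr Nat.card_pos
  rw [chiOrder_eq, hcard]
  rw [← Finset.sum_fiberwise_of_maps_to (fun g _ => (hφ g).1)
    (fun g => (Nat.card (ChiSet m (Subgroup.centralizer ({g} : Set G))
      {x : X // g • x = x}) : ℚ))]
  rw [Finset.sum_div]
  refine Finset.sum_congr rfl fun r hr => ?_
  have hfiber : Finset.univ.filter (fun g => φ g = r) = Finset.univ.filter (fun g => IsConj r g) := by
    ext g
    simp only [Finset.mem_filter, Finset.mem_univ, true_and]
    constructor
    · rintro rfl; exact (hφ g).2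
    · intro h; exact (hφuniq g r ⟨hr, h⟩).symm
  have hconst : ∀ g ∈ Finset.univ.filter (fun g => φ g = r),
      (Nat.card (ChiSet m (Subgroup.centralizer ({g} : Set G)) {x : X // g • x = x}) : ℚ)
      = (Nat.card (ChiSet m (Subgroup.centralizer ({r} : Set G)) {x : X // r • x = x}) : ℚ) := by
    intro g hg
    simp only [Finset.mem_filter, Finset.mem_univ, true_and] at hg
    have : IsConj r g := hg ▸ (hφ g).2
    exact_mod_cast card_chiSet_conj m this
  rw [Finset.sum_congr rfl hconst, Finset.sum_const, nsmul_eq_mul, hfiber]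
  rw [chiOrder_eq]
  have hCpos : (0 : ℚ) < (Nat.card (Subgroup.centralizer ({r} : Set G)) : ℚ) := by
    exact_mod_cast Nat.cast_pos.mpr Nat.card_pos
  have hh := horb r
  rw [div_eq_div_iff hGpos.ne' hCpos.ne', ← hh]
  ring
end

section
/- Let G be a finite group acting on a finite set X and let k ≥ 0. Then |G| divides the sum Σ |X^{⟨g_0,…,g_k⟩}| taken over all (k+1)-tuples (g_0,…,g_k) of pairwise commuting elements of G; that is, the order-k Euler characteristic χ^{(k)}(X,G) = (1/|G|)·Σ |X^{⟨g_0,…,g_k⟩}| is an integer. -/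
open scoped BigOperators

section Aux

variable (k : ℕ) (G : Type*) [Group G] (X : Type*) [MulAction G X]

/-- Commuting tuples with a common fixed point. -/
def CTup :=
  {p : (Fin k → G) × X // (∀ i j, Commute (p.1 i) (p.1 j)) ∧ ∀ i, p.1 i • p.2 = p.2}

instance : MulAction G (CTup k G X) where
  smul g p := ⟨(fun i => g * p.1.1 i * g⁻¹, g • p.1.2), by
    refine ⟨fun i j => ?_, fun i => ?_⟩
    · simpa [MulAut.conj_apply] using (p.2.1 i j).map (MulAut.conj g).toMonoidHom
    · rw [mul_smul, mul_smul, inv_smul_smul, p.2.2 i]⟩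
  one_smul p := by
    apply Subtype.ext
    refine Prod.ext (funext fun i => ?_) (one_smul _ _)
    show (1 : G) * p.1.1 i * (1 : G)⁻¹ = p.1.1 i
    group
  mul_smul g h p := by
    apply Subtype.ext
    refine Prod.ext (funext fun i => ?_) (mul_smul _ _ _)
    show (g * h) * p.1.1 i * (g * h)⁻¹ = g * (h * p.1.1 i * h⁻¹) * g⁻¹
    group

lemma ctup_smul_coe (g : G) (p : CTup k G X) :
    (g • p).val = (fun i => g * p.1.1 i * g⁻¹, g • p.1.2) := rfl

/-- Splitting off the first coordinate of a commuting `(k+1)`-tuple. -/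
def ctupSuccEquiv : CTup (k + 1) G X ≃ {q : G × CTup k G X // q.1 • q.2 = q.2} where
  toFun p := ⟨(p.1.1 0, ⟨(fun i => p.1.1 i.succ, p.1.2),
      fun i j => p.2.1 _ _, fun i => p.2.2 _⟩), by
    apply Subtype.ext
    refine Prod.ext (funext fun i => ?_) (p.2.2 0)
    show p.1.1 0 * p.1.1 i.succ * (p.1.1 0)⁻¹ = p.1.1 i.succ
    rw [(p.2.1 0 i.succ).eq, mul_inv_cancel_right]⟩
  invFun q := ⟨(Fin.cons q.1.1 q.1.2.1.1, q.1.2.1.2), by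
    have hconj := congrArg (Prod.fst ∘ Subtype.val) q.2
    have hx : q.1.1 • q.1.2.1.2 = q.1.2.1.2 := congrArg (Prod.snd ∘ Subtype.val) q.2
    have hc : ∀ j, Commute q.1.1 (q.1.2.1.1 j) := by
      intro j
      have := congrFun hconj j
      simp only [Function.comp, ctup_smul_coe] at this
      rw [Commute, SemiconjBy]
      conv_rhs => rw [← this]
      group
    refine ⟨fun i j => ?_, fun i => ?_⟩
    · refine Fin.cases ?_ (fun i' => ?_) i <;> refine Fin.cases ?_ (fun j' => ?_) j <;>
        simp [Commute.refl, hc, (hc _).symm, q.1.2.2.1]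
    · refine Fin.cases ?_ (fun i' => ?_) i
      · simpa using hx
      · simpa using q.1.2.2.2 i'⟩
  left_inv p := by
    apply Subtype.ext
    refine Prod.ext (funext fun i => ?_) rfl
    exact Fin.cases rfl (fun i' => rfl) i
  right_inv q := by
    obtain ⟨⟨g, ⟨⟨v, x⟩, hv⟩⟩, hq⟩ := q
    apply Subtype.ext
    refine Prod.ext ?_ ?_
    · simp
    · apply Subtype.ext
      refine Prod.ext (funext fun i => ?_) ?_
      · simp
      · simp

end Aux

/-- For a finite group `G` acting on a finite set `X` and `k ≥ 0`, `|G|` divides the sum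
`Σ |X^⟨g₀,…,g_k⟩|` over all `(k+1)`-tuples of pairwise commuting elements of `G` (the sum
being encoded as the cardinality of the set of pairs of a commuting tuple and a common
fixed point); that is, `χ⁽ᵏ⁾(X,G)` is an integer. -/
theorem card_dvd_sum_fixed_points
    (G : Type*) [Group G] [Finite G] (X : Type*) [MulAction G X] [Finite X] (k : ℕ) :
    Nat.card G ∣
        Nat.card {p : (Fin (k + 1) → G) × X //
          (∀ i j, Commute (p.1 i) (p.1 j)) ∧ ∀ i, p.1 i • p.2 = p.2} ∧
      ∃ m : ℤ, chiOrder k G X = (m : ℚ) := by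
  haveI : Finite (CTup k G X) := by
    unfold CTup; infer_instance
  haveI := Fintype.ofFinite G
  haveI := Fintype.ofFinite (CTup k G X)
  classical
  have key : Nat.card {p : (Fin (k + 1) → G) × X //
      (∀ i j, Commute (p.1 i) (p.1 j)) ∧ ∀ i, p.1 i • p.2 = p.2} =
      Fintype.card (Quotient (MulAction.orbitRel G (CTup k G X))) * Nat.card G := by
    have e1 : {p : (Fin (k + 1) → G) × X //
        (∀ i j, Commute (p.1 i) (p.1 j)) ∧ ∀ i, p.1 i • p.2 = p.2} ≃
        {q : G × CTup k G X // q.1 • q.2 = q.2} := ctupSuccEquiv k G X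
    have e2 : {q : G × CTup k G X // q.1 • q.2 = q.2} ≃
        Σ g : G, {t : CTup k G X // g • t = t} :=
      Equiv.subtypeProdEquivSigmaSubtype (fun (g : G) (t : CTup k G X) => g • t = t)
    have e3 : ∀ g : G, {t : CTup k G X // g • t = t} ≃ MulAction.fixedBy (CTup k G X) g :=
      fun g => Equiv.refl _
    rw [Nat.card_congr (e1.trans e2), Nat.card_eq_fintype_card, Fintype.card_sigma]
    rw [Nat.card_eq_fintype_card]
    rw [← MulAction.sum_card_fixedBy_eq_card_orbits_mul_card_group G (CTup k G X)]
    congr 1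
  constructor
  · exact ⟨_, key.trans (mul_comm _ _)⟩
  · refine ⟨Fintype.card (Quotient (MulAction.orbitRel G (CTup k G X))), ?_⟩
    unfold chiOrder
    rw [key]
    have hG : (Nat.card G : ℚ) ≠ 0 := by
      exact_mod_cast Nat.card_pos.ne'
    push_cast
    field_simp
end

section
/- Let R be a commutative ring with unity, and let λ: R → 1 + tR[[t]] be a map such that λ_{a+b}(t) = λ_a(t)·λ_b(t) for all a, b ∈ R and λ_a(t) ≡ 1 + a·t (mod t²) for all a ∈ R. Then every formal power series A(t) ∈ 1 + tR[[t]] can be represented in a unique way as an infinite product A(t) = ∏_{i=1}^{∞} λ_{b_i}(tⁱ) for a sequence (b_i)_{i≥1} of elements of R, where the product converges in the t-adic topology on R[[t]] (the factor λ_{b_i}(tⁱ) is congruent to 1 modulo tⁱ). -/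
open scoped BigOperators

/-- Substitution `t ↦ tⁱ` in a formal power series: `(substPow i f)(t) = f(tⁱ)`. -/
noncomputable def substPow {R : Type*} [CommRing R] (i : ℕ) (f : PowerSeries R) :
    PowerSeries R :=
  PowerSeries.mk fun n => if i ∣ n then PowerSeries.coeff (n / i) f else 0

section Aux

variable {R : Type*} [CommRing R]

lemma coeff_substPow (i n : ℕ) (f : PowerSeries R) :
    PowerSeries.coeff n (substPow i f) =
      if i ∣ n then PowerSeries.coeff (n / i) f else 0 := by
  simp [substPow]

lemma key_coeff (d : ℕ) (a : R) (P F : PowerSeries R)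
    (hP : PowerSeries.coeff 0 P = 1)
    (hF0 : PowerSeries.coeff 0 F = 1)
    (hFd : PowerSeries.coeff (d + 1) F = a)
    (hFj : ∀ j, 0 < j → j ≤ d → PowerSeries.coeff j F = 0) :
    PowerSeries.coeff (d + 1) (P * F) = PowerSeries.coeff (d + 1) P + a := by
  rw [PowerSeries.coeff_mul]
  have hne : ((d + 1, 0) : ℕ × ℕ) ≠ (0, d + 1) := by simp
  have hsub : ({((d + 1 : ℕ), (0 : ℕ)), ((0 : ℕ), (d + 1 : ℕ))} : Finset (ℕ × ℕ)) ⊆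
      Finset.HasAntidiagonal.antidiagonal (d + 1) := by
    intro p hp
    simp only [Finset.mem_insert, Finset.mem_singleton] at hp
    rcases hp with h | h <;> subst h <;> simp
  rw [← Finset.sum_subset hsub ?_]
  · rw [Finset.sum_pair hne, hF0, hFd, hP]
    ring
  · intro p hp hnp
    rw [Finset.HasAntidiagonal.mem_antidiagonal] at hp
    simp only [Finset.mem_insert, Finset.mem_singleton] at hnp
    push_neg at hnp
    obtain ⟨h1, h2⟩ := hnp
    have hp2pos : 0 < p.2 := by
      rcases Nat.eq_zero_or_pos p.2 with h | h
      · exfalso; apply h1; ext <;> omega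
      · exact h
    have hp2le : p.2 ≤ d := by
      by_contra hlt
      apply h2
      have : p.2 = d + 1 := by omega
      ext <;> omega
    rw [hFj p.2 hp2pos hp2le, mul_zero]

lemma coeff_zero_substPow_lam (lam : R → PowerSeries R)
    (h0 : ∀ a : R, PowerSeries.coeff 0 (lam a) = 1) (i : ℕ) (a : R) :
    PowerSeries.coeff 0 (substPow (i + 1) (lam a)) = 1 := by
  rw [coeff_substPow]
  simp [h0]

lemma coeff_zero_prod (lam : R → PowerSeries R)
    (h0 : ∀ a : R, PowerSeries.coeff 0 (lam a) = 1) (c : ℕ → R) (d : ℕ) :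
    PowerSeries.coeff 0 (∏ i ∈ Finset.range d, substPow (i + 1) (lam (c i))) = 1 := by
  rw [PowerSeries.coeff_zero_eq_constantCoeff, map_prod]
  apply Finset.prod_eq_one
  intro i _
  rw [← PowerSeries.coeff_zero_eq_constantCoeff]
  exact coeff_zero_substPow_lam lam h0 i (c i)

/-- The key recursion: the `(d+1)`-st coefficient of the product over `range (d+1)` equals
that of the product over `range d`, plus `c d`. -/
lemma coeff_prod_succ (lam : R → PowerSeries R)
    (h0 : ∀ a : R, PowerSeries.coeff 0 (lam a) = 1)
    (h1 : ∀ a : R, PowerSeries.coeff 1 (lam a) = a) (c : ℕ → R) (d : ℕ) :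
    PowerSeries.coeff (d + 1)
        (∏ i ∈ Finset.range (d + 1), substPow (i + 1) (lam (c i))) =
      PowerSeries.coeff (d + 1)
        (∏ i ∈ Finset.range d, substPow (i + 1) (lam (c i))) + c d := by
  rw [Finset.prod_range_succ]
  apply key_coeff d (c d) _ _ (coeff_zero_prod lam h0 c d)
  · exact coeff_zero_substPow_lam lam h0 d (c d)
  · rw [coeff_substPow]
    simp [Nat.div_self, h1]
  · intro j hj hjd
    rw [coeff_substPow]
    have : ¬ (d + 1) ∣ j := by
      intro hdvd
      have := Nat.le_of_dvd hj hdvd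
      omega
    simp [this]

/-- Partial sequences for the recursive construction. -/
noncomputable def auxSeq (lam : R → PowerSeries R) (A : PowerSeries R) : ℕ → (ℕ → R)
  | 0 => fun _ => 0
  | d + 1 => Function.update (auxSeq lam A d) d
      (PowerSeries.coeff (d + 1) A -
        PowerSeries.coeff (d + 1)
          (∏ i ∈ Finset.range d, substPow (i + 1) (lam (auxSeq lam A d i))))

noncomputable def bSeq (lam : R → PowerSeries R) (A : PowerSeries R) : ℕ → R :=
  fun n => auxSeq lam A (n + 1) n

lemma auxSeq_agree (lam : R → PowerSeries R) (A : PowerSeries R) :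
    ∀ m n, n < m → auxSeq lam A m n = bSeq lam A n := by
  intro m
  induction m with
  | zero => intro n hn; omega
  | succ m ih =>
    intro n hn
    rcases Nat.lt_or_ge n m with h | h
    · rw [show auxSeq lam A (m + 1) n = auxSeq lam A m n by
        simp [auxSeq, Function.update_of_ne (by omega : n ≠ m)]]
      exact ih n h
    · have : n = m := by omega
      subst this
      rfl

end Aux

/-- Let `R` be a commutative ring with unity and `λ : R → 1 + tR[[t]]` an
additive-to-multiplicative homomorphism with `λ_a(t) ≡ 1 + a·t (mod t²)` (a pre-λ-ring
structure).  Then every `A(t) ∈ 1 + tR[[t]]` has a unique representation as a `t`-adically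
convergent infinite product `A(t) = ∏_{i≥1} λ_{b_i}(tⁱ)`; the factor `λ_{b_i}(tⁱ)` is
`≡ 1 (mod tⁱ)`, so the convergence is expressed by saying that for every `d` the coefficient
of `t^d` of `A` coincides with that of the finite product of the factors with `i ≤ d`.
(Here `b : ℕ → R` with `b i` corresponding to the exponent index `i + 1`.) -/
theorem unique_lambda_factorization
    (R : Type*) [CommRing R] (lam : R → PowerSeries R)
    (hmul : ∀ a b : R, lam (a + b) = lam a * lam b)
    (h0 : ∀ a : R, PowerSeries.coeff 0 (lam a) = 1)
    (h1 : ∀ a : R, PowerSeries.coeff 1 (lam a) = a)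
    (A : PowerSeries R) (hA : PowerSeries.coeff 0 A = 1) :
    ∃! b : ℕ → R, ∀ d : ℕ,
      PowerSeries.coeff d A =
        PowerSeries.coeff d (∏ i ∈ Finset.range d, substPow (i + 1) (lam (b i))) := by
  set b := bSeq lam A with hb
  have hprod_eq : ∀ d, (∏ i ∈ Finset.range d, substPow (i + 1) (lam (auxSeq lam A d i))) =
      ∏ i ∈ Finset.range d, substPow (i + 1) (lam (b i)) := by
    intro d
    apply Finset.prod_congr rfl
    intro i hi
    rw [auxSeq_agree lam A d i (Finset.mem_range.mp hi)]
  have hbdef : ∀ d : ℕ, b d = PowerSeries.coeff (d + 1) A -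
      PowerSeries.coeff (d + 1)
        (∏ i ∈ Finset.range d, substPow (i + 1) (lam (b i))) := by
    intro d
    have : b d = auxSeq lam A (d + 1) d := rfl
    rw [this]
    simp only [auxSeq, Function.update_self]
    rw [hprod_eq d]
  refine ⟨b, ?_, ?_⟩
  · intro d
    cases d with
    | zero => simpa using hA
    | succ d =>
      rw [coeff_prod_succ lam h0 h1 b d, hbdef d]
      ring
  · intro c hc
    funext d
    induction d using Nat.strong_induction_on with
    | _ d ih =>
      have hprodc : (∏ i ∈ Finset.range d, substPow (i + 1) (lam (c i))) =
          ∏ i ∈ Finset.range d, substPow (i + 1) (lam (b i)) := by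
        apply Finset.prod_congr rfl
        intro i hi
        rw [ih i (Finset.mem_range.mp hi)]
      have h1' := hc (d + 1)
      rw [coeff_prod_succ lam h0 h1 c d, hprodc] at h1'
      rw [hbdef d, h1']
      ring
end

section
/- Let R be a commutative ring with unity, and let λ: R → 1 + tR[[t]] satisfy λ_{a+b}(t) = λ_a(t)·λ_b(t) for all a, b ∈ R and λ_a(t) ≡ 1 + a·t (mod t²) for all a ∈ R. For A(t) ∈ 1 + tR[[t]] with unique t-adically convergent factorization A(t) = ∏_{i=1}^{∞} λ_{b_i}(tⁱ), define (A(t))^m := ∏_{i=1}^{∞} λ_{m·b_i}(tⁱ) for m ∈ R. Then this operation is a finitely determined power structure over R: (1) if A(t) = 1 + a_1 t + … then (A(t))^m ≡ 1 + m·a_1·t (mod t²); (2) (A(t)·B(t))^m = (A(t))^m·(B(t))^m; (3) (A(t))^{m+n} = (A(t))^m·(A(t))^n; (4) (A(t))^{mn} = ((A(t))^m)^n; and (5) if A(t) ≡ 1 (mod tᵏ) then (A(t))^m ≡ 1 (mod tᵏ). -/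
open scoped BigOperators

/-- An `A(t) ∈ 1 + tR[[t]]` is `t`-adically the product `∏_{i≥1} λ_{b_i}(tⁱ)`:
each coefficient of `A` agrees with the corresponding coefficient of the finite product of
the factors with exponent index at most `d`. -/
def IsLambdaFactorization {R : Type*} [CommRing R] (lam : R → PowerSeries R)
    (A : PowerSeries R) (b : ℕ → R) : Prop :=
  ∀ d : ℕ,
    PowerSeries.coeff d A =
      PowerSeries.coeff d (∏ i ∈ Finset.range d, substPow (i + 1) (lam (b i)))

namespace LPS

open Finset

variable {R : Type*} [CommRing R]

lemma coeff_substPow_zero (i : ℕ) (f : PowerSeries R) :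
    PowerSeries.coeff 0 (substPow i f) = PowerSeries.coeff 0 f := by
  simp [substPow]

lemma coeff_substPow_of_lt {i n : ℕ} (hn : 0 < n) (hni : n < i) (f : PowerSeries R) :
    PowerSeries.coeff n (substPow i f) = 0 := by
  simp only [substPow, PowerSeries.coeff_mk]
  rw [if_neg]
  intro h
  exact absurd (Nat.le_of_dvd hn h) (not_le.mpr hni)

lemma coeff_substPow_self (i : ℕ) (hi : i ≠ 0) (f : PowerSeries R) :
    PowerSeries.coeff i (substPow i f) = PowerSeries.coeff 1 f := by
  simp [substPow, Nat.div_self (Nat.pos_of_ne_zero hi)]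

lemma substPow_one_left (f : PowerSeries R) : substPow 1 f = f := by
  ext n
  simp [substPow]

lemma substPow_one (i : ℕ) (hi : i ≠ 0) : substPow i (1 : PowerSeries R) = 1 := by
  ext n
  simp only [substPow, PowerSeries.coeff_mk, PowerSeries.coeff_one]
  by_cases h : i ∣ n
  · rw [if_pos h]
    by_cases hn : n = 0
    · simp [hn]
    · rw [if_neg, if_neg hn]
      intro hdiv
      have hle := Nat.le_of_dvd (Nat.pos_of_ne_zero hn) h
      exact (Nat.div_pos hle (Nat.pos_of_ne_zero hi)).ne' hdiv
  · rw [if_neg h, if_neg]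
    intro hn
    exact h (hn ▸ dvd_zero i)

lemma substPow_mul (i : ℕ) (hi : i ≠ 0) (f g : PowerSeries R) :
    substPow i (f * g) = substPow i f * substPow i g := by
  ext n
  rw [PowerSeries.coeff_mul]
  simp only [substPow, PowerSeries.coeff_mk]
  by_cases h : i ∣ n
  · obtain ⟨m, rfl⟩ := h
    rw [if_pos ⟨m, rfl⟩, Nat.mul_div_cancel_left _ (Nat.pos_of_ne_zero hi),
      PowerSeries.coeff_mul]
    rw [show (antidiagonal (i * m)).sum
        (fun p => (if i ∣ p.1 then PowerSeries.coeff (p.1 / i) f else 0) *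
          (if i ∣ p.2 then PowerSeries.coeff (p.2 / i) g else 0)) =
        ((antidiagonal m).image fun p => (i * p.1, i * p.2)).sum
        (fun p => (if i ∣ p.1 then PowerSeries.coeff (p.1 / i) f else 0) *
          (if i ∣ p.2 then PowerSeries.coeff (p.2 / i) g else 0)) from ?_]
    · rw [Finset.sum_image ?_]
      · apply Finset.sum_congr rfl
        intro p hp
        rw [if_pos ⟨p.1, rfl⟩, if_pos ⟨p.2, rfl⟩,
          Nat.mul_div_cancel_left _ (Nat.pos_of_ne_zero hi),
          Nat.mul_div_cancel_left _ (Nat.pos_of_ne_zero hi)]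
      · intro p _ q _ hpq
        have h1 : i * p.1 = i * q.1 := congrArg Prod.fst hpq
        have h2 : i * p.2 = i * q.2 := congrArg Prod.snd hpq
        have := Nat.eq_of_mul_eq_mul_left (Nat.pos_of_ne_zero hi) h1
        have := Nat.eq_of_mul_eq_mul_left (Nat.pos_of_ne_zero hi) h2
        exact Prod.ext ‹p.1 = q.1› ‹p.2 = q.2›
    · symm
      apply Finset.sum_subset
      · intro p hp
        simp only [Finset.mem_image, HasAntidiagonal.mem_antidiagonal] at hp ⊢
        obtain ⟨q, hq, rfl⟩ := hp
        simp [← Nat.mul_add, hq]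
      · intro p hp hnp
        rw [HasAntidiagonal.mem_antidiagonal] at hp
        by_cases h1 : i ∣ p.1
        · by_cases h2 : i ∣ p.2
          · exfalso
            obtain ⟨a, ha⟩ := h1
            obtain ⟨c, hc⟩ := h2
            apply hnp
            simp only [Finset.mem_image, HasAntidiagonal.mem_antidiagonal]
            refine ⟨(a, c), ?_, by simp [← ha, ← hc]⟩
            have : i * (a + c) = i * m := by rw [Nat.mul_add, ← ha, ← hc, hp]
            exact Nat.eq_of_mul_eq_mul_left (Nat.pos_of_ne_zero hi) this
          · rw [if_neg h2, mul_zero]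
        · rw [if_neg h1, zero_mul]
  · rw [if_neg h]
    symm
    apply Finset.sum_eq_zero
    intro p hp
    rw [HasAntidiagonal.mem_antidiagonal] at hp
    by_cases h1 : i ∣ p.1
    · rw [if_neg fun h2 => h (hp ▸ Nat.dvd_add h1 h2), mul_zero]
    · rw [if_neg h1, zero_mul]

lemma coeff_mul_stable {Q f : PowerSeries R} {p q : ℕ} (hq : q ≤ p)
    (hf0 : PowerSeries.coeff 0 f = 1)
    (hf : ∀ j, 0 < j → j ≤ p → PowerSeries.coeff j f = 0) :
    PowerSeries.coeff q (Q * f) = PowerSeries.coeff q Q := by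
  rw [PowerSeries.coeff_mul]
  rw [Finset.sum_eq_single (q, 0)]
  · simp [hf0]
  · intro x hx hne
    rw [HasAntidiagonal.mem_antidiagonal] at hx
    have hx2 : x.2 ≠ 0 := by
      intro h0'
      exact hne (Prod.ext (by omega) h0')
    rw [hf x.2 (Nat.pos_of_ne_zero hx2) (by omega), mul_zero]
  · intro h
    exact absurd (HasAntidiagonal.mem_antidiagonal.mpr (by simp)) h

lemma coeff_mul_top {Q f : PowerSeries R} {e : ℕ}
    (hf0 : PowerSeries.coeff 0 f = 1)
    (hf : ∀ j, 0 < j → j ≤ e → PowerSeries.coeff j f = 0) :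
    PowerSeries.coeff (e + 1) (Q * f) =
      PowerSeries.coeff (e + 1) Q +
        PowerSeries.coeff 0 Q * PowerSeries.coeff (e + 1) f := by
  rw [PowerSeries.coeff_mul]
  have hsub : ({(e + 1, 0), (0, e + 1)} : Finset (ℕ × ℕ)) ⊆ antidiagonal (e + 1) := by
    intro p hp
    simp only [Finset.mem_insert, Finset.mem_singleton] at hp
    rcases hp with rfl | rfl <;> simp
  rw [← Finset.sum_subset hsub ?_]
  · rw [Finset.sum_pair (by simp)]
    simp [hf0]
  · intro x hx hnx
    rw [HasAntidiagonal.mem_antidiagonal] at hx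
    simp only [Finset.mem_insert, Finset.mem_singleton] at hnx
    push_neg at hnx
    have hx2 : x.2 ≠ 0 := fun h0' => hnx.1 (Prod.ext (by omega) h0')
    have hx2' : x.2 ≠ e + 1 := fun h' => hnx.2 (Prod.ext (by omega) h')
    rw [hf x.2 (Nat.pos_of_ne_zero hx2) (by omega), mul_zero]

lemma coeff0_prod (g : ℕ → PowerSeries R) (hg : ∀ i, PowerSeries.coeff 0 (g i) = 1)
    (s : Finset ℕ) :
    PowerSeries.coeff 0 (∏ i ∈ s, substPow (i + 1) (g i)) = 1 := by
  rw [PowerSeries.coeff_zero_eq_constantCoeff, map_prod]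
  rw [Finset.prod_eq_one]
  intro i _
  rw [← PowerSeries.coeff_zero_eq_constantCoeff, coeff_substPow_zero]
  exact hg i

lemma coeff_prod_stable (g : ℕ → PowerSeries R) (hg : ∀ i, PowerSeries.coeff 0 (g i) = 1)
    {q d e : ℕ} (hqd : q ≤ d) (hde : d ≤ e) :
    PowerSeries.coeff q (∏ i ∈ range e, substPow (i + 1) (g i)) =
      PowerSeries.coeff q (∏ i ∈ range d, substPow (i + 1) (g i)) := by
  induction e, hde using Nat.le_induction with
  | base => rfl
  | succ e hde ih =>
    rw [Finset.prod_range_succ, coeff_mul_stable (le_trans hqd hde), ih]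
    · rw [coeff_substPow_zero]; exact hg e
    · intro j hj hje
      exact coeff_substPow_of_lt hj (by omega) _

end LPS
section Part2

open Finset LPS

variable {R : Type*} [CommRing R]

noncomputable def facCoeff (lam : R → PowerSeries R) (A : PowerSeries R) : ℕ → R
  | d => PowerSeries.coeff (d + 1) A -
      PowerSeries.coeff (d + 1) (∏ i ∈ (Finset.range d).attach,
        substPow (i.1 + 1) (lam (facCoeff lam A i.1)))
  decreasing_by exact Finset.mem_range.mp i.2

lemma facCoeff_eq (lam : R → PowerSeries R) (A : PowerSeries R) (d : ℕ) :
    facCoeff lam A d = PowerSeries.coeff (d + 1) A -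
      PowerSeries.coeff (d + 1) (∏ i ∈ Finset.range d,
        substPow (i + 1) (lam (facCoeff lam A i))) := by
  rw [facCoeff]
  congr 1
  exact congrArg _ (Finset.prod_attach _ fun i => substPow (i + 1) (lam (facCoeff lam A i)))

lemma isFac_facCoeff (lam : R → PowerSeries R)
    (h0 : ∀ a : R, PowerSeries.coeff 0 (lam a) = 1)
    (h1 : ∀ a : R, PowerSeries.coeff 1 (lam a) = a)
    (A : PowerSeries R) (hA : PowerSeries.coeff 0 A = 1) :
    IsLambdaFactorization lam A (facCoeff lam A) := by
  intro d
  cases d with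
  | zero => simpa using hA
  | succ e =>
    rw [Finset.prod_range_succ,
      coeff_mul_top (by rw [coeff_substPow_zero]; exact h0 _)
        (fun j hj hje => coeff_substPow_of_lt hj (by omega) _),
      coeff_substPow_self _ (Nat.succ_ne_zero e), h1,
      coeff0_prod _ (fun i => h0 _), facCoeff_eq]
    ring

lemma isFac_coeff0 {lam : R → PowerSeries R} {A : PowerSeries R} {b : ℕ → R}
    (hA : IsLambdaFactorization lam A b) : PowerSeries.coeff 0 A = 1 := by
  simpa using hA 0

lemma isFac_ext {lam : R → PowerSeries R} {A B : PowerSeries R} {b : ℕ → R}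
    (hA : IsLambdaFactorization lam A b) (hB : IsLambdaFactorization lam B b) :
    A = B :=
  PowerSeries.ext fun d => by rw [hA d, hB d]

lemma isFac_mul {lam : R → PowerSeries R}
    (hmul : ∀ a b : R, lam (a + b) = lam a * lam b)
    (h0 : ∀ a : R, PowerSeries.coeff 0 (lam a) = 1)
    {A B : PowerSeries R} {b c : ℕ → R}
    (hA : IsLambdaFactorization lam A b) (hB : IsLambdaFactorization lam B c) :
    IsLambdaFactorization lam (A * B) (fun i => b i + c i) := by
  intro d
  rw [PowerSeries.coeff_mul]
  have key : (∏ i ∈ range d, substPow (i + 1) (lam (b i + c i))) =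
      (∏ i ∈ range d, substPow (i + 1) (lam (b i))) *
        (∏ i ∈ range d, substPow (i + 1) (lam (c i))) := by
    rw [← Finset.prod_mul_distrib]
    exact Finset.prod_congr rfl fun i _ => by
      rw [hmul, substPow_mul _ (Nat.succ_ne_zero i)]
  rw [key, PowerSeries.coeff_mul]
  apply Finset.sum_congr rfl
  intro x hx
  rw [HasAntidiagonal.mem_antidiagonal] at hx
  rw [hA x.1, hB x.2,
    coeff_prod_stable _ (fun i => h0 _) (le_refl x.1) (by omega : x.1 ≤ d),
    coeff_prod_stable _ (fun i => h0 _) (le_refl x.2) (by omega : x.2 ≤ d)]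

lemma lam_zero {lam : R → PowerSeries R}
    (hmul : ∀ a b : R, lam (a + b) = lam a * lam b)
    (h0 : ∀ a : R, PowerSeries.coeff 0 (lam a) = 1) : lam 0 = 1 := by
  have h : lam 0 = lam 0 * lam 0 := by
    have := hmul 0 0
    rwa [add_zero] at this
  have hu : IsUnit (lam 0) := by
    rw [PowerSeries.isUnit_iff_constantCoeff, ← PowerSeries.coeff_zero_eq_constantCoeff, h0]
    exact isUnit_one
  obtain ⟨u, hu⟩ := hu
  have : (u : PowerSeries R) * 1 = u * lam 0 := by rw [mul_one, hu, ← h]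
  exact ((Units.mul_right_inj u).mp this).symm

lemma isFac_b_zero {lam : R → PowerSeries R}
    (hlam0 : lam 0 = 1)
    (h1 : ∀ a : R, PowerSeries.coeff 1 (lam a) = a)
    {A : PowerSeries R} {b : ℕ → R} (hA : IsLambdaFactorization lam A b)
    (k : ℕ) (hk : ∀ j : ℕ, 0 < j → j < k → PowerSeries.coeff j A = 0) :
    ∀ i, i + 1 < k → b i = 0 := by
  intro i
  induction i using Nat.strong_induction_on with
  | _ i IH =>
    intro hik
    have h := hA (i + 1)
    rw [hk (i + 1) (by omega) hik] at h
    rw [Finset.prod_eq_single i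
      (fun l hl hne => by
        rw [IH l (by rw [Finset.mem_range] at hl; omega)
            (by rw [Finset.mem_range] at hl; omega),
          hlam0, substPow_one _ (Nat.succ_ne_zero l)])
      (fun hni => absurd (Finset.self_mem_range_succ i) hni)] at h
    rw [coeff_substPow_self _ (Nat.succ_ne_zero i), h1] at h
    exact h.symm

end Part2

/-- Let `λ` be a pre-λ-ring structure on a commutative ring `R`, and let
`P : (A(t), m) ↦ (A(t))^m` be the operation defined on `1 + tR[[t]]` by
`(∏_{i≥1} λ_{b_i}(tⁱ))^m := ∏_{i≥1} λ_{m·b_i}(tⁱ)` (using the unique factorization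
`A(t) = ∏_{i≥1} λ_{b_i}(tⁱ)`).  Then `P` is a finitely determined power structure over `R`:
(1) `(1 + a₁t + …)^m = 1 + m·a₁·t + …`;
(2) `(A·B)^m = A^m·B^m`;
(3) `A^{m+n} = A^m·A^n`;
(4) `A^{mn} = (A^m)^n`;
(5) if `A ≡ 1 (mod t^k)` then `A^m ≡ 1 (mod t^k)`. -/
theorem lambda_power_structure
    (R : Type*) [CommRing R] (lam : R → PowerSeries R)
    (hmul : ∀ a b : R, lam (a + b) = lam a * lam b)
    (h0 : ∀ a : R, PowerSeries.coeff 0 (lam a) = 1)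
    (h1 : ∀ a : R, PowerSeries.coeff 1 (lam a) = a)
    (P : PowerSeries R → R → PowerSeries R)
    (hP : ∀ A : PowerSeries R, PowerSeries.coeff 0 A = 1 →
      ∀ b : ℕ → R, IsLambdaFactorization lam A b →
        ∀ m : R, IsLambdaFactorization lam (P A m) (fun i => m * b i)) :
    ∀ A B : PowerSeries R, PowerSeries.coeff 0 A = 1 → PowerSeries.coeff 0 B = 1 →
      ∀ m n : R,
        (PowerSeries.coeff 0 (P A m) = 1 ∧
            PowerSeries.coeff 1 (P A m) = m * PowerSeries.coeff 1 A) ∧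
          P (A * B) m = P A m * P B m ∧
          P A (m + n) = P A m * P A n ∧
          P A (m * n) = P (P A m) n ∧
          ∀ k : ℕ, (∀ j : ℕ, 0 < j → j < k → PowerSeries.coeff j A = 0) →
            ∀ j : ℕ, 0 < j → j < k → PowerSeries.coeff j (P A m) = 0 := by
  intro A B hA hB m n
  set b : ℕ → R := facCoeff lam A with hb
  set c : ℕ → R := facCoeff lam B with hc
  have hFA : IsLambdaFactorization lam A b := isFac_facCoeff lam h0 h1 A hA
  have hFB : IsLambdaFactorization lam B c := isFac_facCoeff lam h0 h1 B hB
  have hPAm := hP A hA b hFA m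
  have hPAn := hP A hA b hFA n
  have hPBm := hP B hB c hFB m
  refine ⟨⟨isFac_coeff0 hPAm, ?_⟩, ?_, ?_, ?_, ?_⟩
  · -- coeff 1
    have h1A := hFA 1
    have h1P := hPAm 1
    rw [Finset.prod_range_one, LPS.substPow_one_left] at h1A h1P
    rw [h1A, h1P, h1, h1]
  · -- P (A*B) m = P A m * P B m
    have hABfac : IsLambdaFactorization lam (A * B) (fun i => b i + c i) :=
      isFac_mul hmul h0 hFA hFB
    have hAB0 : PowerSeries.coeff 0 (A * B) = 1 := isFac_coeff0 hABfac
    have hL := hP (A * B) hAB0 _ hABfac m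
    have hR : IsLambdaFactorization lam (P A m * P B m)
        (fun i => m * b i + m * c i) := isFac_mul hmul h0 hPAm hPBm
    have heq : (fun i => m * (b i + c i)) = fun i => m * b i + m * c i :=
      funext fun i => by ring
    exact isFac_ext (heq ▸ hL) hR
  · -- P A (m+n) = P A m * P A n
    have hL := hP A hA b hFA (m + n)
    have hR : IsLambdaFactorization lam (P A m * P A n)
        (fun i => m * b i + n * b i) := isFac_mul hmul h0 hPAm hPAn
    have heq : (fun i => (m + n) * b i) = fun i => m * b i + n * b i :=
      funext fun i => by ring
    exact isFac_ext (heq ▸ hL) hR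
  · -- P A (m*n) = P (P A m) n
    have hL := hP A hA b hFA (m * n)
    have hR := hP (P A m) (isFac_coeff0 hPAm) _ hPAm n
    have heq : (fun i => n * (m * b i)) = fun i => (m * n) * b i :=
      funext fun i => by ring
    exact isFac_ext hL (heq ▸ hR)
  · -- finite determinacy
    intro k hk j hj hjk
    have hlam0 : lam 0 = 1 := lam_zero hmul h0
    have hbz : ∀ i, i + 1 < k → b i = 0 := isFac_b_zero hlam0 h1 hFA k hk
    rw [hPAm j, Finset.prod_eq_one (fun i hi => by
      rw [Finset.mem_range] at hi
      show substPow (i + 1) (lam (m * b i)) = 1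
      rw [hbz i (by omega), mul_zero, hlam0, LPS.substPow_one _ (Nat.succ_ne_zero i)])]
    simp [PowerSeries.coeff_one, hj.ne']
end
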